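/- Let w be a well-formed expression of length n. Then for every k with 0 < k < n, the k-rotation of w is not a well-formed expression. -/

import Mathlib

/-- `C v` is the length of `v` minus the sum of its entries. -/
def C (v : List ℕ) : ℤ := (v.length : ℤ) - (v.sum : ℤ)

/-- A list of natural numbers is a well-formed expression (Polish notation
encoding of an ordered rooted tree by outdegrees) if it is of the form
`d :: (w₁ ++ ⋯ ++ w_d)` where each `wᵢ` is a well-formed expression. -/
inductive IsWF : List ℕ → Prop
  | node (d : ℕ) (ws : List (List ℕ)) (hlen : ws.length = d)
      (h : ∀ w ∈ ws, IsWF w) : IsWF (d :: ws.flatten)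

/-- The `k`-rotation of `s = u ++ v` with `v` of length `k` is `v ++ u`. -/
def krot (k : ℕ) (s : List ℕ) : List ℕ :=
  s.drop (s.length - k) ++ s.take (s.length - k)

/-! A well-formed expression `w` has `C w = 1`, while `C p ≤ 0` for every proper prefix `p`
(Łukasiewicz's criterion). The property "`C p < C w` for every proper prefix `p`" is preserved
by concatenation, so this follows by induction on `IsWF`. If both `w = u ++ v` and its rotation
`v ++ u` were well formed with `u`, `v` nonempty, then `u` and `v` would be proper prefixes of
them, so `1 = C w = C u + C v ≤ 0`. -/

@[simp]
lemma C_nil : C [] = 0 := by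
  simp [C]

lemma C_append (a b : List ℕ) : C (a ++ b) = C a + C b := by
  simp only [C, List.length_append, List.sum_append]
  push_cast
  ring

lemma C_cons (d : ℕ) (l : List ℕ) : C (d :: l) = 1 - d + C l := by
  simp only [C, List.length_cons, List.sum_cons]
  push_cast
  ring

def CPrefixLt (n : ℤ) (w : List ℕ) : Prop :=
  C w = n ∧ ∀ p s, p ++ s = w → s ≠ [] → C p < n

namespace CPrefixLt

lemma nil : CPrefixLt 0 [] :=
  ⟨C_nil, fun _ _ h hs => absurd (List.append_eq_nil_iff.1 h).2 hs⟩

lemma nonneg {n : ℤ} {w : List ℕ} (h : CPrefixLt n w) : 0 ≤ n := by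
  rcases eq_or_ne w [] with rfl | hw
  · rw [← h.1, C_nil]
  · simpa using (h.2 [] w rfl hw).le

lemma append {m n : ℤ} {a b : List ℕ} (ha : CPrefixLt m a) (hb : CPrefixLt n b) :
    CPrefixLt (m + n) (a ++ b) := by
  refine ⟨by rw [C_append, ha.1, hb.1], fun p s hps hs => ?_⟩
  rcases List.append_eq_append_iff.1 hps with ⟨a', rfl, rfl⟩ | ⟨c', rfl, rfl⟩
  · rcases eq_or_ne a' [] with rfl | ha'
    · have hn : C [] < n := hb.2 [] b rfl (by simpa using hs)
      have hp : C p = m := by simpa using ha.1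
      rw [C_nil] at hn
      omega
    · have hp := ha.2 p a' rfl ha'
      have hn := hb.nonneg
      omega
  · have hc' := hb.2 c' s rfl hs
    rw [C_append, ha.1]
    omega

lemma flatten {ws : List (List ℕ)} (h : ∀ w ∈ ws, CPrefixLt 1 w) :
    CPrefixLt ws.length ws.flatten := by
  induction ws with
  | nil => exact nil
  | cons w ws ih =>
    rw [List.flatten_cons, List.length_cons, Nat.cast_succ, add_comm]
    exact (h w List.mem_cons_self).append (ih fun v hv => h v (List.mem_cons_of_mem w hv))

lemma cons {d : ℕ} {l : List ℕ} (h : CPrefixLt d l) : CPrefixLt 1 (d :: l) := by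
  refine ⟨by rw [C_cons, h.1]; ring, fun p s hps hs => ?_⟩
  rcases List.append_eq_cons_iff.1 hps with ⟨rfl, -⟩ | ⟨p', rfl, hl⟩
  · simp
  · have := h.2 p' s hl.symm hs
    rw [C_cons]
    omega

end CPrefixLt

lemma IsWF.cPrefixLt {w : List ℕ} (hw : IsWF w) : CPrefixLt 1 w := by
  induction hw with
  | node d ws hlen _ ih => exact CPrefixLt.cons (hlen ▸ CPrefixLt.flatten ih)

lemma not_cPrefixLt_one_append_swap {u v : List ℕ} (h : CPrefixLt 1 (u ++ v))
    (hu : u ≠ []) (hv : v ≠ []) : ¬ CPrefixLt 1 (v ++ u) := by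
  intro h'
  have hCu := h.2 u v rfl hv
  have hCv := h'.2 v u rfl hu
  have := h.1
  rw [C_append] at this
  omega

theorem stmt_4 (w : List ℕ) (hw : IsWF w) (k : ℕ) (hk0 : 0 < k)
    (hkn : k < w.length) : ¬ IsWF (krot k w) := by
  intro hrot
  have hu : w.take (w.length - k) ≠ [] := List.ne_nil_of_length_pos (by simp; omega)
  have hv : w.drop (w.length - k) ≠ [] := List.ne_nil_of_length_pos (by simp; omega)
  rw [← List.take_append_drop (w.length - k) w] at hw
  exact not_cPrefixLt_one_append_swap hw.cPrefixLt hu hv hrot.cPrefixLt
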